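/- In the 6-partite construction above, the edges H1,...,H6 pairwise intersect in exactly one vertex, no vertex lies in three of H1,...,H6, and consequently any cover of {H1,...,H6} has size at least 3. -/
import Mathlib


/-- `E` is an `r`-partite hypergraph with vertex-class map `p`:
every edge contains exactly one vertex from each class. -/
def Rpartite {V : Type*} (r : ℕ) (p : V → Fin r) (E : Finset (Finset V)) : Prop :=
  ∀ e ∈ E, ∀ i : Fin r, ∃! v, v ∈ e ∧ p v = i

/-- Every two edges share a vertex. -/
def Intersecting {V : Type*} (E : Finset (Finset V)) : Prop :=
  ∀ e ∈ E, ∀ f ∈ E, ∃ v, v ∈ e ∧ v ∈ f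

/-- `C` meets every edge of `E`. -/
def IsCover {V : Type*} (E : Finset (Finset V)) (C : Finset V) : Prop :=
  ∀ e ∈ E, ∃ v ∈ C, v ∈ e

/-- The degree of a vertex: the number of edges containing it. -/
def degree {V : Type*} [DecidableEq V] (E : Finset (Finset V)) (v : V) : ℕ :=
  (E.filter (fun e => v ∈ e)).card

/-- The first six edges `H1, …, H6` of the 6-partite construction,
with vertex labels `a1 a3 a4 a6 a8 | b1 b2 b4 b8 b12 | c1 c2 c4 c7 c11 |
d1 d2 d3 d9 d11 | e1 e2 e3 e5 e7 | f1 f2 f3 f5 f7` as `0`–`29`. -/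
def L : Fin 6 → Finset (Fin 30)
  | 0 => {0,5,10,15,20,25}
  | 1 => {0,6,11,16,21,26}
  | 2 => {1,5,11,17,22,27}
  | 3 => {2,7,12,15,21,27}
  | 4 => {1,7,10,16,23,28}
  | 5 => {3,6,12,17,23,25}

theorem stmt17 :
    (∀ i j : Fin 6, i ≠ j → (L i ∩ L j).card = 1) ∧
    (∀ v : Fin 30, (Finset.univ.filter (fun i : Fin 6 => v ∈ L i)).card ≤ 2) ∧
    (∀ C : Finset (Fin 30), (∀ i : Fin 6, ∃ v ∈ C, v ∈ L i) → 3 ≤ C.card) := by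

  have hdeg : ∀ v : Fin 30, (Finset.univ.filter (fun i : Fin 6 => v ∈ L i)).card ≤ 2 := by
    decide
  refine ⟨by decide, hdeg, ?_⟩
  intro C hC
  by_contra h
  push_neg at h
  have hle : C.card ≤ 2 := by omega
  have hsub : (Finset.univ : Finset (Fin 6)) ⊆
      C.biUnion (fun v => Finset.univ.filter (fun i => v ∈ L i)) := by
    intro i _
    obtain ⟨v, hvC, hvL⟩ := hC i
    exact Finset.mem_biUnion.2 ⟨v, hvC, Finset.mem_filter.2 ⟨Finset.mem_univ _, hvL⟩⟩
  have h6 : (6:ℕ) ≤ (C.biUnion (fun v => Finset.univ.filter (fun i => v ∈ L i))).card := by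
    simpa using Finset.card_le_card hsub
  have hbu := Finset.card_biUnion_le (s := C)
    (t := fun v => Finset.univ.filter (fun i : Fin 6 => v ∈ L i))
  have hsum : ∑ v ∈ C, (Finset.univ.filter (fun i : Fin 6 => v ∈ L i)).card ≤ 2 * C.card := by
    calc ∑ v ∈ C, (Finset.univ.filter (fun i : Fin 6 => v ∈ L i)).card
        ≤ ∑ _v ∈ C, 2 := Finset.sum_le_sum (fun v _ => hdeg v)
      _ = 2 * C.card := by rw [Finset.sum_const]; ring
  omega
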